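/- In an LM-system R, the left-hand sides of any two distinct rules are not unifiable. -/

import Mathlib

/-! Basic first-order terms, positions, substitutions and rewriting. -/

inductive Term (F : Type) : Type
  | var : Nat → Term F
  | app : F → List (Term F) → Term F

namespace Term

def subst {F : Type} (σ : Nat → Term F) : Term F → Term F
  | var n => σ n
  | app f ts => app f (ts.attach.map fun ⟨t, _⟩ => t.subst σ)

def root {F : Type} : Term F → Option F
  | var _ => none
  | app f _ => some f

def label {F : Type} : Term F → F ⊕ Nat
  | var n => Sum.inr n
  | app f _ => Sum.inl f

def IsVar {F : Type} : Term F → Prop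
  | var _ => True
  | app _ _ => False

def varsL {F : Type} : Term F → List Nat
  | var n => [n]
  | app _ ts => (ts.attach.map fun ⟨t, _⟩ => t.varsL).flatten

end Term

abbrev Rule (F : Type) := Term F × Term F
abbrev TRS (F : Type) := Set (Rule F)

/-- `SubtermAt t p u` : the subterm of `t` at position `p` is `u`. -/
inductive SubtermAt {F : Type} : Term F → List Nat → Term F → Prop
  | here (t : Term F) : SubtermAt t [] t
  | there {f : F} {ts : List (Term F)} {i : Nat} {u : Term F} {p : List Nat} {v : Term F} :
      ts[i]? = some u → SubtermAt u p v → SubtermAt (Term.app f ts) (i :: p) v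

/-- `ReplaceAt t p v t'` : replacing the subterm of `t` at position `p` by `v` yields `t'`. -/
inductive ReplaceAt {F : Type} : Term F → List Nat → Term F → Term F → Prop
  | here (t u : Term F) : ReplaceAt t [] u u
  | there {f : F} {ts : List (Term F)} {i : Nat} {u : Term F} {p : List Nat} {v w : Term F} :
      ts[i]? = some u → ReplaceAt u p v w →
      ReplaceAt (Term.app f ts) (i :: p) v (Term.app f (ts.set i w))

variable {F : Type}

/-- One rewrite step using the given rule (at some position, with some substitution). -/
def RuleStep (ρ : Rule F) (s t : Term F) : Prop :=
  ∃ (σ : Nat → Term F) (p : List Nat),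
    SubtermAt s p (ρ.1.subst σ) ∧ ReplaceAt s p (ρ.2.subst σ) t

def OneStep (R : TRS F) (s t : Term F) : Prop := ∃ ρ ∈ R, RuleStep ρ s t

/-- A rewrite step at the root position. -/
def RootStep (R : TRS F) (s t : Term F) : Prop :=
  ∃ ρ ∈ R, ∃ σ : Nat → Term F, s = ρ.1.subst σ ∧ t = ρ.2.subst σ

def StarRW (R : TRS F) : Term F → Term F → Prop := Relation.ReflTransGen (OneStep R)
def Plus (R : TRS F) : Term F → Term F → Prop := Relation.TransGen (OneStep R)
/-- Convertibility (the congruence / equational theory generated by `R`). -/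
def Conv (R : TRS F) : Term F → Term F → Prop := Relation.EqvGen (OneStep R)
def Joinable (R : TRS F) (s t : Term F) : Prop := ∃ u, StarRW R s u ∧ StarRW R t u
def NormalForm (R : TRS F) (t : Term F) : Prop := ∀ u, ¬ OneStep R t u
/-- `t` is the `R`-normal form of `s`. -/
def NFof (R : TRS F) (s t : Term F) : Prop := StarRW R s t ∧ NormalForm R t
def Terminating (R : TRS F) : Prop := WellFounded (fun a b : Term F => OneStep R b a)
def Confluent (R : TRS F) : Prop := ∀ s t u, StarRW R s t → StarRW R s u → Joinable R t u
def Convergent (R : TRS F) : Prop := Confluent R ∧ Terminating R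

/-- every proper subterm is irreducible -/
def EpsIrreducible (R : TRS F) (t : Term F) : Prop :=
  ∀ p u, SubtermAt t p u → p ≠ [] → NormalForm R u

def InnermostRedex (R : TRS F) (t : Term F) : Prop :=
  EpsIrreducible R t ∧ ¬ NormalForm R t

/-- Forward-closed, via the one-step-to-normal-form characterization. -/
def FCclosed (R : TRS F) : Prop :=
  ∀ t, InnermostRedex R t → ∀ u, NFof R t u → OneStep R t u

def Unifies (σ : Nat → Term F) (s t : Term F) : Prop := s.subst σ = t.subst σ

def IsMGU (σ : Nat → Term F) (s t : Term F) : Prop :=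
  Unifies σ s t ∧ ∀ τ, Unifies τ s t → ∃ δ, ∀ x, τ x = (σ x).subst δ

def IsRenaming (ρ : Nat → Term F) : Prop :=
  ∃ f : Nat → Nat, Function.Injective f ∧ ∀ n, ρ n = Term.var (f n)

/-- Redundancy criterion for an oriented equation `e` whose right-hand side is
reachable from its left-hand side: some proper subterm of the lhs is reducible. -/
def Redundant (R : TRS F) (e : Rule F) : Prop :=
  ∃ p u, p ≠ ([] : List Nat) ∧ SubtermAt e.1 p u ∧ ¬ NormalForm R u

/-- `R₁ ↝ R₂`: forward overlaps of rules of `R₂` (renamed apart) into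
right-hand sides of rules of `R₁`, at non-variable positions, via an mgu. -/
def FStep (R₁ R₂ : TRS F) : TRS F :=
  { e | ∃ (l₁ r₁ l₂ r₂ : Term F) (ρ : Nat → Term F) (p : List Nat) (u : Term F)
          (σ : Nat → Term F) (r₁' : Term F),
      (l₁, r₁) ∈ R₁ ∧ (l₂, r₂) ∈ R₂ ∧ IsRenaming ρ ∧
      SubtermAt r₁ p u ∧ ¬ u.IsVar ∧ IsMGU σ u (l₂.subst ρ) ∧
      ReplaceAt r₁ p (r₂.subst ρ) r₁' ∧ e = (l₁.subst σ, r₁'.subst σ) }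

def FCiter (R : TRS F) : Nat → TRS F
  | 0 => R
  | k + 1 => FCiter R k ∪ { e | e ∈ FStep (FCiter R k) R ∧ ¬ Redundant (FCiter R k) e }

def FCinf (R : TRS F) : TRS F := ⋃ k, FCiter R k

/-- Forward-closed, via the forward-closure construction: `FC(R) = R`. -/
def ForwardClosedFC (R : TRS F) : Prop := FCinf R = R

/-- `RHS(R)`: `R` together with the conclusions of right-hand-side critical
pair inferences (second rule renamed apart). -/
def RHSset (R : TRS F) : TRS F :=
  R ∪ { e | ∃ (s t u₀ v₀ : Term F) (ρ σ : Nat → Term F), (s, t) ∈ R ∧ (u₀, v₀) ∈ R ∧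
        IsRenaming ρ ∧ IsMGU σ t (v₀.subst ρ) ∧
        s.subst σ ≠ (u₀.subst ρ).subst σ ∧ e = (s.subst σ, (u₀.subst ρ).subst σ) }

/-- the (unordered) pairs of root symbols of two equations coincide -/
def RootPairSimilar (e₁ e₂ : Rule F) : Prop :=
  (e₁.1.root = e₂.1.root ∧ e₁.2.root = e₂.2.root) ∨
  (e₁.1.root = e₂.2.root ∧ e₁.2.root = e₂.1.root)

def QuasiDet (E : TRS F) : Prop :=
  (∀ e ∈ E, ¬ e.1.IsVar ∧ ¬ e.2.IsVar) ∧
  (∀ e ∈ E, e.1.root ≠ e.2.root) ∧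
  (∀ e₁ ∈ E, ∀ e₂ ∈ E, e₁ ≠ e₂ → ¬ RootPairSimilar e₁ e₂)

def HasRootPairRepetition (E : TRS F) : Prop :=
  ∃ e₁ ∈ E, ∃ e₂ ∈ E, e₁ ≠ e₂ ∧ RootPairSimilar e₁ e₂

def VarPreserving (R : TRS F) : Prop :=
  ∀ e ∈ R, ∀ n, n ∈ Term.varsL e.1 ↔ n ∈ Term.varsL e.2

def RightReduced (R : TRS F) : Prop := ∀ e ∈ R, NormalForm R e.2

def AlmostLeftReduced (R : TRS F) : Prop :=
  ¬ ∃ (l₁ r₁ l₂ r₂ : Term F) (p : List Nat) (u : Term F) (σ : Nat → Term F),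
      (l₁, r₁) ∈ R ∧ (l₂, r₂) ∈ R ∧ p ≠ [] ∧ SubtermAt l₁ p u ∧ u = l₂.subst σ

def NonSubtermCollapsing (R : TRS F) : Prop :=
  ¬ ∃ (t u : Term F) (p : List Nat), p ≠ [] ∧ SubtermAt u p t ∧ Conv R t u

structure LMSystem (R : TRS F) : Prop where
  convergent : Convergent R
  almostLeftReduced : AlmostLeftReduced R
  rightReduced : RightReduced R
  nonCollapsing : NonSubtermCollapsing R
  forwardClosed : FCclosed R
  quasiDet : QuasiDet (RHSset R)

/-- the symbol (function symbol or variable) of a term at a position, if defined -/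
def labelAt {F : Type} : List Nat → Term F → Option (F ⊕ Nat)
  | [], t => some t.label
  | i :: p, Term.app _ ts => (ts[i]?).bind (labelAt p)
  | _ :: _, Term.var _ => none

/-- outermost distinguishing position -/
def ODP (s t : Term F) (p : List Nat) : Prop :=
  (labelAt p s ≠ none ∨ labelAt p t ≠ none) ∧
  labelAt p s ≠ labelAt p t ∧
  ∀ q, q <+: p → q ≠ p → labelAt q s = labelAt q t

/-!
Let `l₁σ = l₂τ` be a common instance and `u` its normal form. The roots of `l₁` and `l₂` agree,
so quasi-determinism of `RHS(R)` forces the roots of `r₁` and `r₂` to differ: the three terms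
`l₁σ`, `r₁σ`, `r₂τ`, all with normal form `u`, have pairwise distinct roots. In a convergent,
forward-closed system a term with normal form `u` either has the root of `u` or the root of the
left-hand side of a rule applied at the root in the last step, so that `u` is an instance of its
right-hand side. By quasi-determinism of `RHS(R)` at most one rule has such a right-hand side,
so only two roots are possible.
-/

namespace Term

variable {F : Type}

@[elab_as_elim]
theorem induction_on' {P : Term F → Prop} (t : Term F) (var : ∀ n, P (var n))
    (app : ∀ f ts, (∀ t ∈ ts, P t) → P (app f ts)) : P t :=
  match t with
  | .var n => var n
  | .app f ts => app f ts fun t _ => induction_on' t var app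

def size : Term F → Nat
  | var _ => 1
  | app _ ts => 1 + (ts.attach.map fun ⟨t, _⟩ => t.size).sum

@[simp]
theorem size_var (n : Nat) : (var n : Term F).size = 1 := by simp [size]

@[simp]
theorem size_app (f : F) (ts : List (Term F)) : (app f ts).size = 1 + (ts.map size).sum := by
  simp [size]

theorem size_pos (t : Term F) : 0 < t.size := by
  cases t <;> simp

@[simp]
theorem subst_var (σ : Nat → Term F) (n : Nat) : (var n).subst σ = σ n := by simp [subst]

@[simp]
theorem subst_app (σ : Nat → Term F) (f : F) (ts : List (Term F)) :
    (app f ts).subst σ = app f (ts.map (·.subst σ)) := by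
  simp [subst]

@[simp]
theorem varsL_var (n : Nat) : (var n : Term F).varsL = [n] := by simp [varsL]

@[simp]
theorem varsL_app (f : F) (ts : List (Term F)) : (app f ts).varsL = (ts.map varsL).flatten := by
  simp [varsL]

theorem subst_congr {σ τ : Nat → Term F} (t : Term F) (h : ∀ x ∈ t.varsL, σ x = τ x) :
    t.subst σ = t.subst τ := by
  induction t using induction_on' with
  | var n => simpa using h
  | app f ts ih =>
    simp only [subst_app, app.injEq, true_and]
    exact List.map_congr_left fun t ht => ih t ht fun x hx =>
      h x (by simpa using ⟨t, ht, hx⟩)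

theorem subst_subst (σ τ : Nat → Term F) (t : Term F) :
    (t.subst σ).subst τ = t.subst fun x => (σ x).subst τ := by
  induction t using induction_on' with
  | var n => simp
  | app f ts ih => simpa using List.map_congr_left ih

@[simp]
theorem subst_var_eq_self (t : Term F) : t.subst var = t := by
  induction t using induction_on' with
  | var n => simp
  | app f ts ih => simpa using List.map_congr_left ih |>.trans (List.map_id _)

theorem mem_varsL_subst {y : Nat} {σ : Nat → Term F} {t : Term F} :
    y ∈ (t.subst σ).varsL ↔ ∃ x ∈ t.varsL, y ∈ (σ x).varsL := by
  induction t using induction_on' with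
  | var n => simp
  | app f ts ih =>
    simp only [subst_app, varsL_app, List.map_map, List.mem_flatten, List.mem_map,
      Function.comp_apply]
    constructor
    · rintro ⟨_, ⟨t, ht, rfl⟩, hy⟩
      obtain ⟨x, hx, hyx⟩ := (ih t ht).1 hy
      exact ⟨x, ⟨_, ⟨t, ht, rfl⟩, hx⟩, hyx⟩
    · rintro ⟨x, ⟨_, ⟨t, ht, rfl⟩, hx⟩, hyx⟩
      exact ⟨_, ⟨t, ht, rfl⟩, (ih t ht).2 ⟨x, hx, hyx⟩⟩

theorem root_subst {t : Term F} (h : ¬ t.IsVar) (σ : Nat → Term F) :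
    (t.subst σ).root = t.root := by
  cases t with
  | var n => exact absurd trivial h
  | app f ts => simp [root]

theorem app_subst_eq_app_subst_iff {σ : Nat → Term F} {f g : F} {ss ts : List (Term F)} :
    (app f ss).subst σ = (app g ts).subst σ ↔
      f = g ∧ ss.length = ts.length ∧ ∀ e ∈ ss.zip ts, e.1.subst σ = e.2.subst σ := by
  rw [subst_app, subst_app, app.injEq, ← List.forall₂_eq_eq_eq, List.forall₂_map_left_iff,
    List.forall₂_map_right_iff, List.forall₂_iff_zip]
  simp

theorem size_lt_size_app {f : F} {t : Term F} {ts : List (Term F)} (ht : t ∈ ts) :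
    t.size < (app f ts).size := by
  have := List.le_sum_of_mem (List.mem_map_of_mem (f := size) ht)
  simp only [size_app]
  omega

theorem size_le_size_subst {x : Nat} {t : Term F} (hx : x ∈ t.varsL) (σ : Nat → Term F) :
    (σ x).size ≤ (t.subst σ).size := by
  induction t using induction_on' with
  | var n => simp_all
  | app f ts ih =>
    obtain ⟨t, ht, hxt⟩ : ∃ t ∈ ts, x ∈ t.varsL := by simpa using hx
    rw [subst_app]
    exact (ih t ht hxt).trans (size_lt_size_app (List.mem_map_of_mem ht)).le

theorem subst_ne_of_mem_varsL {x : Nat} {t : Term F} (hx : x ∈ t.varsL) (ht : t ≠ var x)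
    (σ : Nat → Term F) : σ x ≠ t.subst σ := by
  cases t with
  | var n => simp_all
  | app f ts =>
    obtain ⟨t, ht, hxt⟩ : ∃ t ∈ ts, x ∈ t.varsL := by simpa using hx
    intro h
    have hle := size_le_size_subst hxt σ
    have hlt := size_lt_size_app (f := f) (List.mem_map_of_mem (f := (·.subst σ)) ht)
    rw [h, subst_app] at hle
    omega

end Term

section Unification

open Term Function

variable {F : Type}

def UnifiesAll (σ : Nat → Term F) (E : List (Term F × Term F)) : Prop :=
  ∀ e ∈ E, Unifies σ e.1 e.2

def IsMGUAll (θ : Nat → Term F) (E : List (Term F × Term F)) : Prop :=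
  UnifiesAll θ E ∧ ∀ τ, UnifiesAll τ E → ∃ δ, ∀ x, τ x = (θ x).subst δ

def eqnVars (E : List (Term F × Term F)) : Finset Nat :=
  (E.flatMap fun e => e.1.varsL ++ e.2.varsL).toFinset

def eqnSize (E : List (Term F × Term F)) : Nat :=
  (E.map fun e => e.1.size + e.2.size).sum

def unifMeasure (E : List (Term F × Term F)) : Nat ×ₗ Nat :=
  toLex ((eqnVars E).card, eqnSize E)

/-- One step of the Martelli–Montanari unification procedure, guided by a unifier `ν`. -/
def UnifReduct (ν : Nat → Term F) (E E' : List (Term F × Term F)) : Prop :=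
  unifMeasure E' < unifMeasure E ∧ UnifiesAll ν E' ∧
    ∀ θ', IsMGUAll θ' E' → ∃ θ, IsMGUAll θ E

@[simp]
theorem unifiesAll_nil (σ : Nat → Term F) : UnifiesAll σ [] := by simp [UnifiesAll]

@[simp]
theorem unifiesAll_cons {σ : Nat → Term F} {e : Term F × Term F} {E : List (Term F × Term F)} :
    UnifiesAll σ (e :: E) ↔ Unifies σ e.1 e.2 ∧ UnifiesAll σ E := by
  simp [UnifiesAll]

@[simp]
theorem unifiesAll_append {σ : Nat → Term F} {E E' : List (Term F × Term F)} :
    UnifiesAll σ (E ++ E') ↔ UnifiesAll σ E ∧ UnifiesAll σ E' := by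
  simp [UnifiesAll, or_imp, forall_and]

theorem mem_eqnVars {x : Nat} {E : List (Term F × Term F)} :
    x ∈ eqnVars E ↔ ∃ e ∈ E, x ∈ e.1.varsL ∨ x ∈ e.2.varsL := by
  simp [eqnVars]

theorem isMGUAll_nil : IsMGUAll (var : Nat → Term F) [] :=
  ⟨unifiesAll_nil _, fun τ _ => ⟨τ, fun x => by simp⟩⟩

theorem IsMGUAll.of_unifiesAll_iff {θ : Nat → Term F} {E E' : List (Term F × Term F)}
    (h : ∀ σ, UnifiesAll σ E ↔ UnifiesAll σ E') (hθ : IsMGUAll θ E') : IsMGUAll θ E :=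
  ⟨(h θ).2 hθ.1, fun τ hτ => hθ.2 τ ((h τ).1 hτ)⟩

theorem unifMeasure_lt_of_card_lt {E E' : List (Term F × Term F)}
    (h : (eqnVars E').card < (eqnVars E).card) : unifMeasure E' < unifMeasure E :=
  Prod.Lex.toLex_lt_toLex.2 (Or.inl h)

theorem unifMeasure_lt_of_subset {E E' : List (Term F × Term F)}
    (hV : eqnVars E' ⊆ eqnVars E) (hs : eqnSize E' < eqnSize E) :
    unifMeasure E' < unifMeasure E := by
  rcases (Finset.card_le_card hV).lt_or_eq with h | h
  · exact unifMeasure_lt_of_card_lt h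
  · exact Prod.Lex.toLex_lt_toLex.2 (Or.inr ⟨h, hs⟩)

theorem unifReduct_of_eq {ν : Nat → Term F} {t : Term F} {E : List (Term F × Term F)}
    (hν : UnifiesAll ν E) : UnifReduct ν ((t, t) :: E) E := by
  have hunif : ∀ σ, UnifiesAll σ ((t, t) :: E) ↔ UnifiesAll σ E := by simp [Unifies]
  refine ⟨unifMeasure_lt_of_subset ?_ ?_, hν, fun θ hθ => ⟨θ, hθ.of_unifiesAll_iff hunif⟩⟩
  · intro x hx
    obtain ⟨e, he, hxe⟩ := mem_eqnVars.1 hx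
    exact mem_eqnVars.2 ⟨e, List.mem_cons_of_mem _ he, hxe⟩
  · have := t.size_pos
    simp [eqnSize]
    omega

theorem subst_update_var_of_not_mem {x : Nat} {t u : Term F} (hx : x ∉ u.varsL) :
    u.subst (update var x t) = u := by
  rw [subst_congr (τ := var) u fun y hy => update_of_ne (ne_of_mem_of_not_mem hy hx) _ _,
    subst_var_eq_self]

theorem update_var_subst_eq {x : Nat} {t : Term F} {τ : Nat → Term F} (h : τ x = t.subst τ) :
    (fun y => (update var x t y).subst τ) = τ := by
  funext y
  rcases eq_or_ne y x with rfl | hy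
  · simp [h]
  · simp [hy]

def eqnElim (x : Nat) (t : Term F) (E : List (Term F × Term F)) : List (Term F × Term F) :=
  E.map fun e => (e.1.subst (update var x t), e.2.subst (update var x t))

theorem unifiesAll_eqnElim {x : Nat} {t : Term F} {E : List (Term F × Term F)}
    {τ : Nat → Term F} (h : UnifiesAll τ ((var x, t) :: E)) : UnifiesAll τ (eqnElim x t E) := by
  rw [unifiesAll_cons, Unifies, subst_var] at h
  simp only [UnifiesAll, eqnElim, List.mem_map, forall_exists_index, and_imp,
    forall_apply_eq_imp_iff₂, Unifies, subst_subst, update_var_subst_eq h.1]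
  exact h.2

theorem IsMGUAll.of_eqnElim {x : Nat} {t : Term F} {E : List (Term F × Term F)}
    {θ' : Nat → Term F} (hx : x ∉ t.varsL) (hθ' : IsMGUAll θ' (eqnElim x t E)) :
    IsMGUAll (fun y => (update var x t y).subst θ') ((var x, t) :: E) := by
  have hsubst : ∀ u : Term F, u.subst (fun y => (update var x t y).subst θ') =
      (u.subst (update var x t)).subst θ' := fun u => (subst_subst _ _ u).symm
  refine ⟨?_, fun τ hτ => ?_⟩
  · refine unifiesAll_cons.2 ⟨?_, fun e he => ?_⟩
    · simp only [Unifies, hsubst, subst_update_var_of_not_mem hx, subst_var, update_self]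
    · simp only [Unifies, hsubst]
      exact hθ'.1 _ (List.mem_map_of_mem he)
  · obtain ⟨δ, hδ⟩ := hθ'.2 τ (unifiesAll_eqnElim hτ)
    have hτx : τ x = t.subst τ := by simpa [Unifies] using (unifiesAll_cons.1 hτ).1
    refine ⟨δ, fun y => ?_⟩
    rw [← congrFun (update_var_subst_eq hτx) y, subst_subst]
    exact subst_congr _ fun z _ => hδ z

theorem eqnVars_eqnElim_subset {x : Nat} {t : Term F} {E : List (Term F × Term F)}
    (hx : x ∉ t.varsL) : eqnVars (eqnElim x t E) ⊆ (eqnVars ((var x, t) :: E)).erase x := by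
  have key : ∀ u : Term F, ∀ y ∈ (u.subst (update var x t)).varsL,
      y ≠ x ∧ (y ∈ t.varsL ∨ y ∈ u.varsL) := by
    intro u y hy
    obtain ⟨z, hz, hyz⟩ := mem_varsL_subst.1 hy
    rcases eq_or_ne z x with rfl | hzx
    · rw [update_self] at hyz
      exact ⟨ne_of_mem_of_not_mem hyz hx, Or.inl hyz⟩
    · rw [update_of_ne hzx, varsL_var, List.mem_singleton] at hyz
      exact hyz ▸ ⟨hzx, Or.inr hz⟩
  intro y hy
  simp only [eqnElim, mem_eqnVars, List.mem_map] at hy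
  obtain ⟨_, ⟨e, he, rfl⟩, hye⟩ := hy
  obtain ⟨hyx, hyt | hye⟩ : y ≠ x ∧ (y ∈ t.varsL ∨ y ∈ e.1.varsL ∨ y ∈ e.2.varsL) := by
    rcases hye with hye | hye <;> have := key _ y hye <;> tauto
  · exact Finset.mem_erase.2 ⟨hyx, mem_eqnVars.2 ⟨_, List.mem_cons_self, Or.inr hyt⟩⟩
  · exact Finset.mem_erase.2 ⟨hyx, mem_eqnVars.2 ⟨e, List.mem_cons_of_mem _ he, hye⟩⟩

theorem unifReduct_elim {ν : Nat → Term F} {x : Nat} {t : Term F}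
    {E : List (Term F × Term F)} (hx : x ∉ t.varsL) (hν : UnifiesAll ν ((var x, t) :: E)) :
    UnifReduct ν ((var x, t) :: E) (eqnElim x t E) := by
  refine ⟨unifMeasure_lt_of_card_lt ?_, unifiesAll_eqnElim hν,
    fun θ' hθ' => ⟨_, hθ'.of_eqnElim hx⟩⟩
  refine (Finset.card_le_card (eqnVars_eqnElim_subset hx)).trans_lt
    (Finset.card_erase_lt_of_mem ?_)
  simp [mem_eqnVars]

theorem exists_unifReduct_var {ν : Nat → Term F} {x : Nat} {t : Term F}
    {E : List (Term F × Term F)} (hν : UnifiesAll ν ((var x, t) :: E)) :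
    ∃ E', UnifReduct ν ((var x, t) :: E) E' := by
  by_cases htx : t = var x
  · subst htx
    exact ⟨E, unifReduct_of_eq (unifiesAll_cons.1 hν).2⟩
  by_cases hx : x ∈ t.varsL
  · have hνx : ν x = t.subst ν := by simpa [Unifies] using (unifiesAll_cons.1 hν).1
    exact absurd hνx (subst_ne_of_mem_varsL hx htx ν)
  · exact ⟨_, unifReduct_elim hx hν⟩

theorem UnifReduct.swap {ν : Nat → Term F} {s t : Term F} {E E' : List (Term F × Term F)}
    (h : UnifReduct ν ((s, t) :: E) E') : UnifReduct ν ((t, s) :: E) E' := by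
  have hunif : ∀ σ, UnifiesAll σ ((t, s) :: E) ↔ UnifiesAll σ ((s, t) :: E) := by
    simp [Unifies, eq_comm]
  have hmeasure : unifMeasure ((t, s) :: E) = unifMeasure ((s, t) :: E) := by
    have hV : eqnVars ((t, s) :: E) = eqnVars ((s, t) :: E) := by
      ext y
      simp only [mem_eqnVars, List.mem_cons, exists_eq_or_imp]
      exact or_congr_left or_comm
    simp only [unifMeasure, hV, eqnSize, List.map_cons, add_comm t.size]
  obtain ⟨hlt, hν, hlift⟩ := h
  refine ⟨hmeasure ▸ hlt, hν, fun θ' hθ' => ?_⟩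
  obtain ⟨θ, hθ⟩ := hlift θ' hθ'
  exact ⟨θ, hθ.of_unifiesAll_iff hunif⟩

theorem eqnSize_zip_le (ss ts : List (Term F)) :
    eqnSize (ss.zip ts) ≤ (ss.map size).sum + (ts.map size).sum := by
  induction ss generalizing ts with
  | nil => simp [eqnSize]
  | cons s ss ih =>
    cases ts with
    | nil => simp [eqnSize]
    | cons t ts =>
      have := ih ts
      simp only [eqnSize, List.zip_cons_cons, List.map_cons, List.sum_cons] at this ⊢
      omega

theorem unifReduct_decompose {ν : Nat → Term F} {f g : F} {ss ts : List (Term F)}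
    {E : List (Term F × Term F)} (hν : UnifiesAll ν ((app f ss, app g ts) :: E)) :
    UnifReduct ν ((app f ss, app g ts) :: E) (ss.zip ts ++ E) := by
  obtain ⟨hhead, hνE⟩ := unifiesAll_cons.1 hν
  obtain ⟨rfl, hlen, hzip⟩ := app_subst_eq_app_subst_iff.1 hhead
  have hunif : ∀ σ, UnifiesAll σ ((app f ss, app f ts) :: E) ↔ UnifiesAll σ (ss.zip ts ++ E) := by
    intro σ
    rw [unifiesAll_cons, unifiesAll_append, Unifies, app_subst_eq_app_subst_iff]
    simp [hlen, UnifiesAll, Unifies]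
  refine ⟨unifMeasure_lt_of_subset ?_ ?_, (hunif ν).1 hν,
    fun θ hθ => ⟨θ, hθ.of_unifiesAll_iff hunif⟩⟩
  · intro y hy
    simp only [mem_eqnVars, List.mem_append, List.mem_cons] at hy ⊢
    obtain ⟨⟨a, b⟩, hab | hab, hy⟩ := hy
    · obtain ⟨ha, hb⟩ := List.of_mem_zip hab
      refine ⟨_, Or.inl rfl, ?_⟩
      simp only [varsL_app, List.mem_flatten, List.mem_map]
      rcases hy with hy | hy
      · exact Or.inl ⟨_, ⟨a, ha, rfl⟩, hy⟩
      · exact Or.inr ⟨_, ⟨b, hb, rfl⟩, hy⟩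
    · exact ⟨_, Or.inr hab, hy⟩
  · have := eqnSize_zip_le ss ts
    simp only [eqnSize, List.map_append, List.sum_append, List.map_cons, List.sum_cons,
      size_app] at this ⊢
    omega

theorem exists_unifReduct {ν : Nat → Term F} {e : Term F × Term F}
    {E : List (Term F × Term F)} (hν : UnifiesAll ν (e :: E)) : ∃ E', UnifReduct ν (e :: E) E' := by
  obtain ⟨s | ⟨f, ss⟩, t⟩ := e
  · exact exists_unifReduct_var hν
  · cases t with
    | var x =>
      have hν' : UnifiesAll ν ((var x, app f ss) :: E) := by
        simpa [Unifies, eq_comm] using hν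
      obtain ⟨E', hE'⟩ := exists_unifReduct_var hν'
      exact ⟨E', hE'.swap⟩
    | app g ts => exact ⟨_, unifReduct_decompose hν⟩

theorem exists_isMGUAll {ν : Nat → Term F} {E : List (Term F × Term F)} (hν : UnifiesAll ν E) :
    ∃ θ, IsMGUAll θ E := by
  induction E using (InvImage.wf unifMeasure wellFounded_lt).induction with
  | _ E ih =>
  cases E with
  | nil => exact ⟨var, isMGUAll_nil⟩
  | cons e E =>
    obtain ⟨E', hlt, hν', hlift⟩ := exists_unifReduct hν
    obtain ⟨θ', hθ'⟩ := ih E' hlt hν'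
    exact hlift θ' hθ'

theorem exists_isMGU {s t : Term F} {ν : Nat → Term F} (hν : Unifies ν s t) :
    ∃ θ, IsMGU θ s t := by
  obtain ⟨θ, hθ, hmost⟩ := exists_isMGUAll (E := [(s, t)]) (by simpa using hν)
  exact ⟨θ, by simpa using hθ, fun τ hτ => hmost τ (by simpa using hτ)⟩

end Unification

section Overlaps

open Term

variable {F : Type} {R : TRS F}

theorem exists_renaming_isMGU_factor {a b h : Term F} {β η : Nat → Term F}
    (hcom : b.subst β = h.subst η) :
    ∃ ρ θ δ, IsRenaming ρ ∧ IsMGU θ b (h.subst ρ) ∧ a.subst β = (a.subst θ).subst δ ∧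
      ∀ g : Term F, g.subst η = ((g.subst ρ).subst θ).subst δ := by
  -- shift the variables of the second rule above all variables of `a` and `b`
  set N := (a.varsL ++ b.varsL).sum + 1
  have hN : ∀ x ∈ a.varsL ++ b.varsL, x < N := fun x hx =>
    Nat.lt_succ_of_le (List.le_sum_of_mem hx)
  set ρ : Nat → Term F := fun n => var (n + N)
  set ν : Nat → Term F := fun x => if x < N then β x else η (x - N)
  have hνβ : ∀ t ∈ [a, b], t.subst ν = t.subst β := by
    intro t ht
    refine subst_congr t fun x hx => if_pos (hN x ?_)
    simp only [List.mem_cons, List.not_mem_nil, or_false] at ht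
    rcases ht with rfl | rfl <;> simp [hx]
  have hνη : ∀ g : Term F, (g.subst ρ).subst ν = g.subst η := fun g => by
    rw [subst_subst]
    exact subst_congr g fun x _ => by simp [ρ, ν]
  have hν : Unifies ν b (h.subst ρ) := by
    rw [Unifies, hνβ b (by simp), hνη, hcom]
  obtain ⟨θ, hθ⟩ := exists_isMGU hν
  obtain ⟨δ, hδ⟩ := hθ.2 ν hν
  have hfactor : ∀ t : Term F, t.subst ν = (t.subst θ).subst δ := fun t => by
    rw [subst_subst]
    exact subst_congr t fun x _ => hδ x
  refine ⟨ρ, θ, δ, ⟨(· + N), add_left_injective N, fun _ => rfl⟩, hθ, ?_, fun g => ?_⟩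
  · rw [← hνβ a (by simp), hfactor]
  · rw [← hνη, hfactor]

theorem overlap_or_subst_eq {a b g h : Term F} (hab : (a, b) ∈ R) (hgh : (g, h) ∈ R)
    (ha : ¬ a.IsVar) (hg : ¬ g.IsVar) {β η : Nat → Term F} (hcom : b.subst β = h.subst η) :
    (∃ e ∈ RHSset R, e.1.root = a.root ∧ e.2.root = g.root) ∨ a.subst β = g.subst η := by
  obtain ⟨ρ, θ, δ, hρ, hθ, ha_eq, hg_eq⟩ := exists_renaming_isMGU_factor (a := a) hcom
  by_cases heq : a.subst θ = (g.subst ρ).subst θ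
  · exact Or.inr (by rw [ha_eq, hg_eq, heq])
  · refine Or.inl ⟨_, Or.inr ⟨a, b, g, h, ρ, θ, hab, hgh, hρ, hθ, heq, rfl⟩, root_subst ha θ, ?_⟩
    rw [subst_subst, root_subst hg]

theorem QuasiDet.not_isVar_of_mem (hq : QuasiDet (RHSset R)) {e : Rule F} (he : e ∈ R) :
    ¬ e.1.IsVar ∧ ¬ e.2.IsVar :=
  hq.1 e (Or.inl he)

/-- If the left-hand sides had different roots, the overlaps of `b` into `h` and of `h` into `b`
would be distinct members of `RHS(R)` with crossed root pairs. -/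
theorem QuasiDet.eq_of_rhs_subst_eq (hq : QuasiDet (RHSset R)) {e₁ e₂ : Rule F}
    (hab : e₁ ∈ R) (hgh : e₂ ∈ R) {β η : Nat → Term F}
    (hcom : e₁.2.subst β = e₂.2.subst η) : e₁ = e₂ := by
  obtain ⟨a, b⟩ := e₁
  obtain ⟨g, h⟩ := e₂
  obtain ⟨ha, hb⟩ := hq.not_isVar_of_mem hab
  obtain ⟨hg, hh⟩ := hq.not_isVar_of_mem hgh
  have hroot : a.root = g.root := by
    by_contra hne
    have hsubst : a.subst β ≠ g.subst η := fun heq =>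
      hne (by rw [← root_subst ha β, heq, root_subst hg])
    obtain ⟨e₁, he₁, h₁₁, h₁₂⟩ := (overlap_or_subst_eq hab hgh ha hg hcom).resolve_right hsubst
    obtain ⟨e₂, he₂, h₂₁, h₂₂⟩ :=
      (overlap_or_subst_eq hgh hab hg ha hcom.symm).resolve_right (Ne.symm hsubst)
    refine hq.2.2 e₁ he₁ e₂ he₂ (fun h₁₂' => hne ?_) (Or.inr ⟨?_, ?_⟩)
    · rw [← h₁₁, h₁₂', h₂₁]
    · rw [h₁₁, h₂₂]
    · rw [h₁₂, h₂₁]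
  by_contra hne
  refine hq.2.2 _ (Or.inl hab) _ (Or.inl hgh) hne (Or.inl ⟨hroot, ?_⟩)
  rw [← root_subst hb β, hcom, root_subst hh]

end Overlaps

section RootOrigin

open Term

variable {F : Type} {R : TRS F}

theorem SubtermAt.eq_of_nil {t u : Term F} (h : SubtermAt t [] u) : u = t := by
  cases h; rfl

theorem ReplaceAt.eq_of_nil {t v t' : Term F} (h : ReplaceAt t [] v t') : t' = v := by
  cases h; rfl

theorem rootStep_subst {e : Rule F} (he : e ∈ R) (σ : Nat → Term F) :
    RootStep R (e.1.subst σ) (e.2.subst σ) :=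
  ⟨e, he, σ, rfl, rfl⟩

theorem RootStep.oneStep {s t : Term F} (h : RootStep R s t) : OneStep R s t := by
  obtain ⟨e, he, σ, rfl, rfl⟩ := h
  exact ⟨e, he, σ, [], .here _, .here _ _⟩

theorem OneStep.exists_of_subtermAt {t w w' : Term F} {p : List Nat} (hsub : SubtermAt t p w)
    (hstep : OneStep R w w') : ∃ t', OneStep R t t' ∧ (p ≠ [] → t'.root = t.root) := by
  induction hsub with
  | here => exact ⟨w', hstep, fun h => absurd rfl h⟩
  | there hget _ ih =>
    obtain ⟨_, ⟨e, he, σ, q, hs, hr⟩, _⟩ := ih hstep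
    exact ⟨_, ⟨e, he, σ, _ :: q, .there hget hs, .there hget hr⟩, fun _ => rfl⟩

theorem EpsIrreducible.rootStep {t v : Term F} (heps : EpsIrreducible R t) (h : OneStep R t v) :
    RootStep R t v := by
  obtain ⟨e, he, σ, p, hsub, hrep⟩ := h
  obtain rfl : p = [] := by
    by_contra hp
    exact heps p _ hsub hp _ (rootStep_subst he σ).oneStep
  exact ⟨e, he, σ, hsub.eq_of_nil.symm, hrep.eq_of_nil⟩

theorem NormalForm.eq_of_starRW {t u : Term F} (hn : NormalForm R t) (h : StarRW R t u) :
    u = t := by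
  induction h using Relation.ReflTransGen.head_induction_on with
  | refl => rfl
  | head hstep _ _ => exact absurd hstep (hn _)

theorem exists_nfof (hterm : Terminating R) (t : Term F) : ∃ u, NFof R t u := by
  induction t using hterm.induction with
  | _ t ih =>
  by_cases hn : NormalForm R t
  · exact ⟨t, .refl, hn⟩
  · obtain ⟨t', ht'⟩ : ∃ t', OneStep R t t' := by simpa [NormalForm] using hn
    obtain ⟨u, htu, hu⟩ := ih t' ht'
    exact ⟨u, .head ht' htu, hu⟩

theorem NFof.of_starRW (hconf : Confluent R) {s t u : Term F} (hnf : NFof R s u)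
    (hst : StarRW R s t) : NFof R t u := by
  obtain ⟨w, htw, huw⟩ := hconf s t u hst hnf.1
  obtain rfl := hnf.2.eq_of_starRW huw
  exact ⟨htw, hnf.2⟩

/-- `f` is a possible root of a term that rewrites to the normal form `u`. -/
def RootOrigin (R : TRS F) (u : Term F) (f : Option F) : Prop :=
  u.root = f ∨ ∃ s, RootStep R s u ∧ s.root = f

/-- Rewriting below the root keeps the root; once every proper subterm is normal, forward
closure reaches the normal form in a single step, which must then be a root step. -/
theorem NFof.rootOrigin (hterm : Terminating R) (hconf : Confluent R) (hfc : FCclosed R)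
    {t u : Term F} (h : NFof R t u) : RootOrigin R u t.root := by
  induction t using hterm.induction with
  | _ t ih =>
  by_cases hn : NormalForm R t
  · exact Or.inl (by rw [hn.eq_of_starRW h.1])
  by_cases heps : EpsIrreducible R t
  · exact Or.inr ⟨t, heps.rootStep (hfc t ⟨heps, hn⟩ u h), rfl⟩
  obtain ⟨p, w, hsub, hp, hw⟩ : ∃ p w, SubtermAt t p w ∧ p ≠ [] ∧ ¬ NormalForm R w := by
    simpa [EpsIrreducible] using heps
  obtain ⟨w', hw'⟩ : ∃ w', OneStep R w w' := by simpa [NormalForm] using hw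
  obtain ⟨t', ht', hroot⟩ := hw'.exists_of_subtermAt hsub
  rw [← hroot hp]
  exact ih t' ht' (h.of_starRW hconf (.single ht'))

theorem QuasiDet.rootOrigin_eq_or (hq : QuasiDet (RHSset R)) {u : Term F} {f g : Option F}
    (hf : RootOrigin R u f) (hg : RootOrigin R u g) : f = g ∨ f = u.root ∨ g = u.root := by
  rcases hf with hf | ⟨_, ⟨e₁, he₁, σ₁, rfl, rfl⟩, rfl⟩
  · exact Or.inr (Or.inl hf.symm)
  rcases hg with hg | ⟨_, ⟨e₂, he₂, σ₂, rfl, hu⟩, rfl⟩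
  · exact Or.inr (Or.inr hg.symm)
  obtain rfl := hq.eq_of_rhs_subst_eq he₁ he₂ hu
  have hlhs := (hq.not_isVar_of_mem he₁).1
  exact Or.inl (by rw [root_subst hlhs, root_subst hlhs])

theorem QuasiDet.rootOrigin_pigeonhole (hq : QuasiDet (RHSset R)) {u : Term F}
    {f g k : Option F} (hf : RootOrigin R u f) (hg : RootOrigin R u g) (hk : RootOrigin R u k) :
    f = g ∨ f = k ∨ g = k := by
  rcases hq.rootOrigin_eq_or hf hg with h | rfl | rfl
  · exact Or.inl h
  · rcases hq.rootOrigin_eq_or hg hk with h | h | h <;> simp_all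
  · rcases hq.rootOrigin_eq_or hf hk with h | h | h <;> simp_all

end RootOrigin

/-- left-hand sides of distinct rules of an LM-system are not unifiable
(formulated via common instances, which is equivalent under renaming apart). -/
theorem lhs_not_unifiable {F : Type} (R : TRS F) (hlm : LMSystem R)
    (e1 e2 : Rule F) (h1 : e1 ∈ R) (h2 : e2 ∈ R) (hne : e1 ≠ e2) :
    ¬ ∃ (σ τ : Nat → Term F), e1.1.subst σ = e2.1.subst τ := by
  rintro ⟨σ, τ, hcom⟩
  obtain ⟨⟨hconf, hterm⟩, -, -, -, hfc, hq⟩ := hlm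
  obtain ⟨l₁, r₁⟩ := e1
  obtain ⟨l₂, r₂⟩ := e2
  obtain ⟨hl₁, hr₁⟩ := hq.not_isVar_of_mem h1
  obtain ⟨hl₂, hr₂⟩ := hq.not_isVar_of_mem h2
  have hl : l₁.root = l₂.root := by
    rw [← Term.root_subst hl₁ σ, hcom, Term.root_subst hl₂]
  have hr : r₁.root ≠ r₂.root := fun hr => hq.2.2 _ (Or.inl h1) _ (Or.inl h2) hne (Or.inl ⟨hl, hr⟩)
  obtain ⟨u, hu⟩ := exists_nfof hterm (l₁.subst σ)
  have hu₁ : NFof R (r₁.subst σ) u := hu.of_starRW hconf (.single (rootStep_subst h1 σ).oneStep)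
  have hu₂ : NFof R (r₂.subst τ) u :=
    hu.of_starRW hconf (.single (hcom ▸ (rootStep_subst h2 τ).oneStep))
  have ho := hu.rootOrigin hterm hconf hfc
  have ho₁ := hu₁.rootOrigin hterm hconf hfc
  have ho₂ := hu₂.rootOrigin hterm hconf hfc
  rw [Term.root_subst hl₁] at ho
  rw [Term.root_subst hr₁] at ho₁
  rw [Term.root_subst hr₂] at ho₂
  rcases hq.rootOrigin_pigeonhole ho ho₁ ho₂ with h | h | h
  · exact hq.2.1 _ (Or.inl h1) h
  · exact hq.2.1 _ (Or.inl h2) (hl ▸ h)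
  · exact hr h
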